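/- Let A ∈ ℝ^{m×n} be any matrix, let G = (G_1,…,G_n) be a vector of i.i.d. standard Gaussian random variables, and let B = (B_1,…,B_n) be a vector of i.i.d. Rademacher random variables. Let X = AG and Y = AB, so X_t and Y_t (t ∈ [m]) are the coordinates of these random vectors. Then E[ sup_{t∈[m]} Y_t ] ≤ √(π/2) · E[ sup_{t∈[m]} X_t ]. -/

import Mathlib

open MeasureTheory ProbabilityTheory
open scoped ENNReal

/-- The law of a Rademacher random variable: uniform on `{-1, +1}`. -/
noncomputable def radMeasure : Measure ℝ :=
  (2⁻¹ : ℝ≥0∞) • Measure.dirac (1 : ℝ) + (2⁻¹ : ℝ≥0∞) • Measure.dirac (-1 : ℝ)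

/-!
Since the Gaussian law is symmetric, `ε ⊙ |G|` is again a standard Gaussian vector when `ε` is a
Rademacher vector independent of `G`. Conditionally on `ε`, Jensen's inequality for the convex map
`x ↦ sup_t (A x)_t` gives `E_G sup_t (A (ε ⊙ |G|))_t ≥ sup_t (A (ε ⊙ E|G|))_t`, and
`E|G_j| = √(2/π)`; integrating over `ε` yields the comparison.
-/

open Real Set Matrix

instance : IsProbabilityMeasure radMeasure :=
  ⟨by simp [radMeasure, ENNReal.inv_two_add_inv_two]⟩

lemma lintegral_radMeasure (f : ℝ → ℝ≥0∞) :
    ∫⁻ x, f x ∂radMeasure = 2⁻¹ * f 1 + 2⁻¹ * f (-1) := by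
  simp [radMeasure, lintegral_add_measure, lintegral_smul_measure]

theorem map_mul_abs_radMeasure_prod {ν : Measure ℝ} [SFinite ν] (hν : ν.map Neg.neg = ν) :
    (radMeasure.prod ν).map (fun p ↦ p.1 * |p.2|) = ν := by
  refine Measure.ext_of_lintegral _ fun f hf ↦ ?_
  have h_abs : ∀ x : ℝ, f |x| + f (-|x|) = f x + f (-x) := fun x ↦ by
    rcases abs_cases x with ⟨hx, -⟩ | ⟨hx, -⟩ <;> simp [hx, add_comm]
  have h_neg : ∫⁻ x, f (-x) ∂ν = ∫⁻ x, f x ∂ν := by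
    conv_rhs => rw [← hν]
    rw [lintegral_map hf measurable_neg]
  rw [lintegral_map hf (by fun_prop), lintegral_prod _ (by fun_prop), lintegral_radMeasure]
  simp only [one_mul, neg_one_mul]
  rw [← mul_add, ← lintegral_add_left (by fun_prop : Measurable fun x ↦ f |x|)]
  simp_rw [h_abs]
  rw [lintegral_add_left hf, h_neg, ← two_mul, ← mul_assoc,
    ENNReal.inv_mul_cancel two_ne_zero ENNReal.ofNat_ne_top, one_mul]

lemma integral_abs_gaussianReal : ∫ x, |x| ∂gaussianReal 0 1 = √(2 / π) := by
  have h_half : ∫ x in Ioi (0 : ℝ), x * exp (-(1 / 2) * x ^ 2) = 1 := by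
    have := integral_rpow_mul_exp_neg_mul_rpow (p := 2) (q := 1) (b := 1 / 2)
      (by norm_num) (by norm_num) (by norm_num)
    norm_num at this
    simpa [neg_mul] using this
  calc ∫ x, |x| ∂gaussianReal 0 1
      = ∫ x, (√(2 * π))⁻¹ * (|x| * exp (-(1 / 2) * |x| ^ 2)) := by
        rw [integral_gaussianReal_eq_integral_smul one_ne_zero]
        congr with x
        simp only [gaussianPDFReal, smul_eq_mul, sq_abs, NNReal.coe_one, mul_one, sub_zero]
        ring_nf
    _ = 2 * (√(2 * π))⁻¹ := by
        rw [integral_const_mul, integral_comp_abs (f := fun x ↦ x * exp (-(1 / 2) * x ^ 2)),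
          h_half]
        ring
    _ = √(2 / π) := by
        rw [show (2 : ℝ) / π = 2 ^ 2 / (2 * π) by field_simp, Real.sqrt_div' _ (by positivity),
          Real.sqrt_sq zero_le_two, div_eq_mul_inv]

lemma integrable_id_radMeasure : Integrable id radMeasure :=
  ((integrable_dirac (by simp)).smul_measure (by simp)).add_measure
    ((integrable_dirac (by simp)).smul_measure (by simp))

section iSup

variable {α ι : Type*} [MeasurableSpace α] {μ : Measure α} [Fintype ι] [Nonempty ι]
  {f : ι → α → ℝ}

lemma integrable_iSup (hf : ∀ i, Integrable (f i) μ) :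
    Integrable (fun x ↦ ⨆ i, f i x) μ := by
  convert Finset.univ.sup'_induction Finset.univ_nonempty f (p := (Integrable · μ))
    (fun _ h₁ _ h₂ ↦ h₁.sup h₂) (fun i _ ↦ hf i) using 1
  ext x
  rw [Finset.sup'_apply, Finset.sup'_univ_eq_ciSup]

lemma iSup_integral_le_integral_iSup (hf : ∀ i, Integrable (f i) μ) :
    ⨆ i, ∫ x, f i x ∂μ ≤ ∫ x, ⨆ i, f i x ∂μ :=
  ciSup_le fun i ↦ integral_mono (hf i) (integrable_iSup hf) fun x ↦
    le_ciSup (f := fun i ↦ f i x) (Finite.bddAbove_range _) i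

end iSup

section MatrixSup

variable {ι κ : Type*} [Fintype ι] [Fintype κ] (A : Matrix ι κ ℝ)

lemma measurable_iSup_mulVec : Measurable fun x : κ → ℝ ↦ ⨆ t, (A *ᵥ x) t :=
  Measurable.iSup fun t ↦ by unfold Matrix.mulVec dotProduct; fun_prop

variable [Nonempty ι] {ν : Measure ℝ} [IsProbabilityMeasure ν]

lemma integrable_iSup_mulVec (hν : Integrable id ν) :
    Integrable (fun x ↦ ⨆ t, (A *ᵥ x) t) (Measure.pi fun _ : κ ↦ ν) :=
  integrable_iSup fun t ↦ integrable_finsetSum _ fun j _ ↦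
    (integrable_eval (i := j) hν).const_mul (A t j)

lemma integral_abs_mul_iSup_mulVec_le (hν : Integrable id ν) (a : κ → ℝ) :
    (∫ y, |y| ∂ν) * ⨆ t, (A *ᵥ a) t
      ≤ ∫ b, ⨆ t, (A *ᵥ fun j ↦ a j * |b j|) t ∂(Measure.pi fun _ : κ ↦ ν) := by
  set c := ∫ y, |y| ∂ν
  have h_term : ∀ t j, Integrable (fun b : κ → ℝ ↦ A t j * (a j * |b j|))
      (Measure.pi fun _ : κ ↦ ν) := fun t j ↦
    ((integrable_comp_eval (i := j) hν.abs).const_mul (a j)).const_mul (A t j)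
  have h_mean : ∀ t, ∫ b, (A *ᵥ fun j ↦ a j * |b j|) t ∂(Measure.pi fun _ : κ ↦ ν)
      = (A *ᵥ (c • a)) t := fun t ↦ by
    simp only [Matrix.mulVec, dotProduct]
    rw [integral_finsetSum _ fun j _ ↦ h_term t j]
    refine Finset.sum_congr rfl fun j _ ↦ ?_
    rw [integral_const_mul, integral_const_mul,
      integral_comp_eval (i := j) (μ := fun _ : κ ↦ ν) (f := fun y ↦ |y|) (by fun_prop)]
    simp only [Pi.smul_apply, smul_eq_mul, c]
    ring
  calc c * ⨆ t, (A *ᵥ a) t = ⨆ t, (A *ᵥ (c • a)) t := by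
        rw [Real.mul_iSup_of_nonneg (integral_nonneg fun _ ↦ abs_nonneg _)]
        simp only [Matrix.mulVec_smul, Pi.smul_apply, smul_eq_mul]
        rfl
    _ = ⨆ t, ∫ b, (A *ᵥ fun j ↦ a j * |b j|) t ∂(Measure.pi fun _ : κ ↦ ν) := by
        simp only [h_mean]
    _ ≤ _ := iSup_integral_le_integral_iSup fun t ↦
        integrable_finsetSum _ fun j _ ↦ h_term t j

lemma measurePreserving_mul_abs_pi (hsymm : ν.map Neg.neg = ν) :
    MeasurePreserving (fun p : (κ → ℝ) × (κ → ℝ) ↦ fun j ↦ p.1 j * |p.2 j|)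
      ((Measure.pi fun _ ↦ radMeasure).prod (Measure.pi fun _ ↦ ν))
      (Measure.pi fun _ ↦ ν) :=
  (measurePreserving_pi _ _ fun _ ↦
      ⟨by fun_prop, map_mul_abs_radMeasure_prod hsymm⟩).comp
    ((measurePreserving_arrowProdEquivProdArrow ℝ ℝ κ _ _).symm _)

theorem integral_abs_mul_integral_iSup_mulVec_radMeasure_le (hsymm : ν.map Neg.neg = ν)
    (hν : Integrable id ν) :
    (∫ y, |y| ∂ν) * ∫ x, ⨆ t, (A *ᵥ x) t ∂(Measure.pi fun _ : κ ↦ radMeasure)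
      ≤ ∫ x, ⨆ t, (A *ᵥ x) t ∂(Measure.pi fun _ : κ ↦ ν) := by
  have hΨ := measurePreserving_mul_abs_pi (κ := κ) hsymm
  have h_int_prod : Integrable (fun p ↦ ⨆ t, (A *ᵥ fun j ↦ p.1 j * |p.2 j|) t)
      ((Measure.pi fun _ ↦ radMeasure).prod (Measure.pi fun _ ↦ ν)) :=
    (hΨ.integrable_comp (measurable_iSup_mulVec A).aestronglyMeasurable).mpr
      (integrable_iSup_mulVec A hν)
  calc (∫ y, |y| ∂ν) * ∫ x, ⨆ t, (A *ᵥ x) t ∂(Measure.pi fun _ : κ ↦ radMeasure)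
      = ∫ a, (∫ y, |y| ∂ν) * ⨆ t, (A *ᵥ a) t ∂(Measure.pi fun _ : κ ↦ radMeasure) :=
        (integral_const_mul _ _).symm
    _ ≤ ∫ a, ∫ b, ⨆ t, (A *ᵥ fun j ↦ a j * |b j|) t ∂(Measure.pi fun _ : κ ↦ ν)
          ∂(Measure.pi fun _ : κ ↦ radMeasure) :=
        integral_mono ((integrable_iSup_mulVec A integrable_id_radMeasure).const_mul _)
          h_int_prod.integral_prod_left (integral_abs_mul_iSup_mulVec_le A hν)
    _ = ∫ p, ⨆ t, (A *ᵥ fun j ↦ p.1 j * |p.2 j|) t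
          ∂((Measure.pi fun _ ↦ radMeasure).prod (Measure.pi fun _ ↦ ν)) :=
        (integral_prod _ h_int_prod).symm
    _ = ∫ x, ⨆ t, (A *ᵥ x) t ∂(Measure.pi fun _ : κ ↦ ν) := by
        conv_rhs => rw [← hΨ.map_eq]
        rw [integral_map hΨ.measurable.aemeasurable
          (measurable_iSup_mulVec A).aestronglyMeasurable]

end MatrixSup

lemma integral_comp_eq_integral_pi_of_iIndepFun {κ Ω : Type*} [Fintype κ] [MeasurableSpace Ω]
    {μ : Measure Ω} {X : κ → Ω → ℝ} {ν : Measure ℝ} (hX : ∀ j, Measurable (X j))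
    (hind : iIndepFun X μ) (hlaw : ∀ j, μ.map (X j) = ν) {F : (κ → ℝ) → ℝ}
    (hF : Measurable F) :
    ∫ ω, F (fun j ↦ X j ω) ∂μ = ∫ x, F x ∂(Measure.pi fun _ ↦ ν) := by
  have h_joint := hind.map_fun_eq_pi_map fun j ↦ (hX j).aemeasurable
  simp only [hlaw] at h_joint
  rw [← h_joint, integral_map (measurable_pi_lambda _ hX).aemeasurable hF.aestronglyMeasurable]

/-- **Gaussian–Bernoulli comparison.** For any matrix `A ∈ ℝ^{m×n}`, a vector `G` of
i.i.d. standard Gaussians and a vector `B` of i.i.d. Rademacher variables,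
`E[sup_t (AB)_t] ≤ √(π/2) · E[sup_t (AG)_t]`. -/
theorem bernoulli_le_gaussian_sup :
    ∀ (m n : ℕ) (A : Matrix (Fin m) (Fin n) ℝ)
      (Ω₁ : Type) [MeasurableSpace Ω₁] (μ₁ : Measure Ω₁) [IsProbabilityMeasure μ₁]
      (Ω₂ : Type) [MeasurableSpace Ω₂] (μ₂ : Measure Ω₂) [IsProbabilityMeasure μ₂]
      (G : Fin n → Ω₁ → ℝ) (B : Fin n → Ω₂ → ℝ),
      (∀ i, Measurable (G i)) →
      iIndepFun G μ₁ →
      (∀ i, Measure.map (G i) μ₁ = gaussianReal 0 1) →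
      (∀ i, Measurable (B i)) →
      iIndepFun B μ₂ →
      (∀ i, Measure.map (B i) μ₂ = radMeasure) →
      (∫ ω, (⨆ t : Fin m, ∑ j, A t j * B j ω) ∂μ₂)
        ≤ Real.sqrt (Real.pi / 2) * ∫ ω, (⨆ t : Fin m, ∑ j, A t j * G j ω) ∂μ₁ := by
  intro m n A Ω₁ _ μ₁ _ Ω₂ _ μ₂ _ G B hG hG_ind hG_law hB hB_ind hB_law
  rcases isEmpty_or_nonempty (Fin m) with _ | _
  · simp
  have h_comparison := integral_abs_mul_integral_iSup_mulVec_radMeasure_le A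
    (by simpa using gaussianReal_map_neg (μ := 0) (v := 1))
    ((memLp_id_gaussianReal 1).integrable le_rfl)
  rw [integral_abs_gaussianReal] at h_comparison
  have h_rad : ∫ ω, (⨆ t, ∑ j, A t j * B j ω) ∂μ₂
      = ∫ x, ⨆ t, (A *ᵥ x) t ∂(Measure.pi fun _ ↦ radMeasure) :=
    integral_comp_eq_integral_pi_of_iIndepFun hB hB_ind hB_law (measurable_iSup_mulVec A)
  have h_gauss : ∫ ω, (⨆ t, ∑ j, A t j * G j ω) ∂μ₁
      = ∫ x, ⨆ t, (A *ᵥ x) t ∂(Measure.pi fun _ ↦ gaussianReal 0 1) :=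
    integral_comp_eq_integral_pi_of_iIndepFun hG hG_ind hG_law (measurable_iSup_mulVec A)
  rw [h_rad, h_gauss]
  calc ∫ x, ⨆ t, (A *ᵥ x) t ∂(Measure.pi fun _ ↦ radMeasure)
      = √(π / 2) *
          (√(2 / π) * ∫ x, ⨆ t, (A *ᵥ x) t ∂(Measure.pi fun _ ↦ radMeasure)) := by
        rw [← mul_assoc, ← Real.sqrt_mul (by positivity), div_mul_div_comm, mul_comm π 2,
          div_self (by positivity), Real.sqrt_one, one_mul]
    _ ≤ _ := mul_le_mul_of_nonneg_left h_comparison (Real.sqrt_nonneg _)
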